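/- Fix ξ > 0 with g(ξ) > 0, a > 0, integers 0 ≤ k and m ≥ k+2, assume ρ_a is continuous in a neighborhood of ψ_a(ξ) and that the bias expansion of η̂ holds (e.g. ρ_a is (m+1)-times continuously differentiable near ψ_a(ξ)), and let (h(n))_{n∈ℕ} be positive reals with h(n) → 0 and n·h(n)^{2k+1} → ∞. Then n·h(n)^{2k+1}·Var[η̂_{k,n,h(n),a}(ξ)] converges, as n → ∞, to z_a(ξ)·‖K_k‖₂²/s_d, where z_a(ξ) = ξ^{(d-2)/2}·g(ξ)/ψ_a'(ξ) = ρ_a(ψ_a(ξ)) and ‖K_k‖₂² := ∫_ℝ K_k(w)² dw. -/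

import Mathlib

open Real Filter MeasureTheory Matrix

/-- The transformation `ψ_a(ξ) = -a + (a^{d/2} + ξ^{d/2})^{2/d}`. -/
noncomputable def psi (d : ℕ) (a : ℝ) (ξ : ℝ) : ℝ :=
  -a + (a ^ ((d : ℝ) / 2) + ξ ^ ((d : ℝ) / 2)) ^ (2 / (d : ℝ))

/-- The inverse transformation `Ψ_a(t) = ((t+a)^{d/2} - a^{d/2})^{2/d}`. -/
noncomputable def Psi (d : ℕ) (a : ℝ) (t : ℝ) : ℝ :=
  ((t + a) ^ ((d : ℝ) / 2) - a ^ ((d : ℝ) / 2)) ^ (2 / (d : ℝ))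

/-- The normalized generator `g̃(ξ) = ξ^{(d-2)/2}·g(ξ)`. -/
noncomputable def gtilde (d : ℕ) (g : ℝ → ℝ) (ξ : ℝ) : ℝ :=
  ξ ^ (((d : ℝ) - 2) / 2) * g ξ

/-- The function `z_a(ξ) = g̃(ξ)/ψ_a'(ξ)`. -/
noncomputable def za (d : ℕ) (a : ℝ) (g : ℝ → ℝ) (ξ : ℝ) : ℝ :=
  gtilde d g ξ / deriv (psi d a) ξ

/-- The function `ρ_a = z_a ∘ Ψ_a`. -/
noncomputable def rho (d : ℕ) (a : ℝ) (g : ℝ → ℝ) (t : ℝ) : ℝ :=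
  za d a g (Psi d a t)

/-- The quadratic form `(x-μ)ᵀ Σ⁻¹ (x-μ)`. -/
noncomputable def quadForm {d : ℕ} (μv : Fin d → ℝ) (S : Matrix (Fin d) (Fin d) ℝ)
    (x : Fin d → ℝ) : ℝ :=
  (x - μv) ⬝ᵥ (S⁻¹ *ᵥ (x - μv))

/-- The elliptical density `f(x) = |Σ|^{-1/2} g((x-μ)ᵀ Σ⁻¹ (x-μ))`. -/
noncomputable def ellDensity {d : ℕ} (g : ℝ → ℝ) (μv : Fin d → ℝ)
    (S : Matrix (Fin d) (Fin d) ℝ) (x : Fin d → ℝ) : ℝ :=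
  |S.det| ^ (-(1 : ℝ) / 2) * g (quadForm μv S x)

/-- The constant `s_d = π^{d/2}/Γ(d/2)`. -/
noncomputable def sd (d : ℕ) : ℝ := π ^ ((d : ℝ) / 2) / Real.Gamma ((d : ℝ) / 2)

/-- The derivative estimator `η̂_{k,n,h,a}(ξ)`. -/
noncomputable def etahat {Ω : Type*} (d k : ℕ) (a : ℝ) (Kk : ℝ → ℝ)
    (μv : Fin d → ℝ) (S : Matrix (Fin d) (Fin d) ℝ)
    (X : ℕ → Ω → (Fin d → ℝ)) (n : ℕ) (h ξ : ℝ) (ω : Ω) : ℝ :=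
  (1 / (n * h ^ (k + 1) * sd d)) *
    ∑ i ∈ Finset.range n,
      (Kk ((psi d a ξ - psi d a (quadForm μv S (X i ω))) / h) +
       Kk ((psi d a ξ + psi d a (quadForm μv S (X i ω))) / h))

/-! For small `h` the reflected terms `K((ψ_a(ξ) + ψ_a(ξᵢ))/h)` vanish, because `K` has compact
support and `ψ_a(ξ) > 0`; so `η̂` is a normalised sum of `n` i.i.d. bounded variables
`K((ψ_a(ξ) - ψ_a(ξᵢ))/h)` and its variance is `n` times a single variance. The moments of one
summand come from three changes of variables: `x = μ + A y` with `A Aᵀ = Σ` followed by polar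
coordinates gives `E F(ξᵢ) = s_d ∫₀^∞ F(t) g̃(t) dt`, the substitution `u = ψ_a(t)` turns `g̃` into
`ρ_a`, and `u = ψ_a(ξ) - h w` gives `E K^j(…) = s_d h B_j(h)` with
`B_j(h) = ∫ K(w)^j ρ̄(ψ_a(ξ) - h w) dw`, where `ρ̄` is `ρ_a` extended by zero to `ℝ`. Hence `n h^{2k+1} Var η̂ = B₂(h)/s_d - h B₁(h)²`, and dominated
convergence with the continuity of `ρ_a` at `ψ_a(ξ)` gives `B_j(h) → ρ_a(ψ_a(ξ)) ∫ K^j`, where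
`ρ_a(ψ_a(ξ)) = z_a(ξ)`. -/

open Set Topology

section psi

variable {d : ℕ} {a : ℝ}

lemma rpow_half_rpow_two_div (hd : 0 < d) {x : ℝ} (hx : 0 ≤ x) :
    (x ^ ((d : ℝ) / 2)) ^ (2 / (d : ℝ)) = x := by
  rw [← rpow_mul hx, div_mul_div_cancel₀ (by positivity), div_self (by positivity), rpow_one]

lemma rpow_two_div_rpow_half (hd : 0 < d) {x : ℝ} (hx : 0 ≤ x) :
    (x ^ (2 / (d : ℝ))) ^ ((d : ℝ) / 2) = x := by
  rw [← rpow_mul hx, div_mul_div_cancel₀ (by positivity), div_self two_ne_zero, rpow_one]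

lemma psi_zero (hd : 0 < d) (ha : 0 ≤ a) : psi d a 0 = 0 := by
  rw [psi, zero_rpow (by positivity), add_zero, rpow_half_rpow_two_div hd ha, neg_add_cancel]

lemma strictMonoOn_psi (hd : 0 < d) (ha : 0 ≤ a) : StrictMonoOn (psi d a) (Ici 0) := by
  intro s (hs : 0 ≤ s) t _ hst
  unfold psi
  gcongr

lemma psi_pos (hd : 0 < d) (ha : 0 ≤ a) {t : ℝ} (ht : 0 < t) : 0 < psi d a t :=
  psi_zero hd ha ▸ strictMonoOn_psi hd ha self_mem_Ici ht.le ht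

lemma psi_nonneg (hd : 0 < d) (ha : 0 ≤ a) {t : ℝ} (ht : 0 ≤ t) : 0 ≤ psi d a t :=
  (strictMonoOn_psi hd ha).monotoneOn self_mem_Ici ht ht |>.trans_eq' (psi_zero hd ha)

lemma Psi_psi (hd : 0 < d) (ha : 0 ≤ a) {t : ℝ} (ht : 0 ≤ t) : Psi d a (psi d a t) = t := by
  rw [Psi, psi, neg_add_cancel_comm, rpow_two_div_rpow_half hd (by positivity),
    add_sub_cancel_left, rpow_half_rpow_two_div hd ht]

lemma rpow_half_sub_rpow_half_nonneg (hd : 0 < d) (ha : 0 ≤ a) {u : ℝ} (hu : 0 ≤ u) :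
    0 ≤ (u + a) ^ ((d : ℝ) / 2) - a ^ ((d : ℝ) / 2) :=
  sub_nonneg.2 (rpow_le_rpow ha (le_add_of_nonneg_left hu) (by positivity))

lemma psi_Psi (hd : 0 < d) (ha : 0 ≤ a) {u : ℝ} (hu : 0 ≤ u) : psi d a (Psi d a u) = u := by
  rw [psi, Psi, rpow_two_div_rpow_half hd (rpow_half_sub_rpow_half_nonneg hd ha hu),
    add_sub_cancel, rpow_half_rpow_two_div hd (by positivity)]
  ring

lemma psi_image_Ioi (hd : 0 < d) (ha : 0 ≤ a) : psi d a '' Ioi 0 = Ioi 0 := by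
  refine Subset.antisymm (image_subset_iff.2 fun t ht => psi_pos hd ha ht) fun u (hu : 0 < u) => ?_
  have hΨ : 0 ≤ Psi d a u := rpow_nonneg (rpow_half_sub_rpow_half_nonneg hd ha hu.le) _
  refine ⟨Psi d a u, hΨ.lt_of_ne fun hΨ0 => hu.ne ?_, psi_Psi hd ha hu.le⟩
  rw [← psi_Psi hd ha hu.le, ← hΨ0, psi_zero hd ha]

lemma hasDerivAt_psi (ha : 0 ≤ a) {t : ℝ} (ht : 0 < t) :
    HasDerivAt (psi d a)
      (2 / (d : ℝ) * (a ^ ((d : ℝ) / 2) + t ^ ((d : ℝ) / 2)) ^ (2 / (d : ℝ) - 1) *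
        ((d : ℝ) / 2 * t ^ ((d : ℝ) / 2 - 1))) t := by
  have hsum : a ^ ((d : ℝ) / 2) + t ^ ((d : ℝ) / 2) ≠ 0 := by positivity
  exact ((hasDerivAt_rpow_const (Or.inl hsum)).comp t
    ((hasDerivAt_rpow_const (Or.inl ht.ne')).const_add _)).const_add (-a)

lemma deriv_psi_pos (hd : 0 < d) (ha : 0 ≤ a) {t : ℝ} (ht : 0 < t) : 0 < deriv (psi d a) t := by
  have hsum : 0 < a ^ ((d : ℝ) / 2) + t ^ ((d : ℝ) / 2) := by positivity
  rw [(hasDerivAt_psi ha ht).deriv]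
  positivity

lemma continuous_psi : Continuous (psi d a) := by
  unfold psi
  fun_prop (disch := positivity)

lemma continuous_Psi : Continuous (Psi d a) := by
  unfold Psi
  fun_prop (disch := positivity)

lemma measurable_rho {g : ℝ → ℝ} (hgm : Measurable g) : Measurable (rho d a g) :=
  (((measurable_id.pow_const _).mul hgm).div (measurable_deriv _)).comp
    continuous_Psi.measurable

lemma setIntegral_Ioi_mul_rho (hd : 0 < d) (ha : 0 ≤ a) (g F : ℝ → ℝ) :
    ∫ u in Ioi 0, F u * rho d a g u = ∫ t in Ioi 0, F (psi d a t) * gtilde d g t := by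
  conv_lhs => rw [← psi_image_Ioi hd ha]
  rw [integral_image_eq_integral_abs_deriv_smul measurableSet_Ioi
    (fun t ht => (hasDerivAt_psi ha ht).differentiableAt.hasDerivAt.hasDerivWithinAt)
    ((strictMonoOn_psi hd ha).injOn.mono Ioi_subset_Ici_self)]
  refine setIntegral_congr_fun measurableSet_Ioi fun t (ht : 0 < t) => ?_
  have hψ' := deriv_psi_pos hd ha ht
  rw [rho, Psi_psi hd ha ht.le, za, abs_of_pos hψ', smul_eq_mul]
  field_simp

end psi

lemma continuous_quadForm {d : ℕ} (μv : Fin d → ℝ) (S : Matrix (Fin d) (Fin d) ℝ) :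
    Continuous (quadForm μv S) := by
  unfold quadForm
  fun_prop

lemma quadForm_nonneg {d : ℕ} (μv : Fin d → ℝ) {S : Matrix (Fin d) (Fin d) ℝ} (hS : S.PosDef)
    (x : Fin d → ℝ) : 0 ≤ quadForm μv S x := by
  simpa [quadForm] using hS.inv.posSemidef.dotProduct_mulVec_nonneg (x - μv)

lemma quadForm_mul_transpose_add_mulVec {d : ℕ} (μv : Fin d → ℝ) {A : Matrix (Fin d) (Fin d) ℝ}
    (hA : IsUnit A.det) (y : Fin d → ℝ) : quadForm μv (A * Aᵀ) (μv + A *ᵥ y) = y ⬝ᵥ y := by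
  have hAT : IsUnit Aᵀ.det := by rwa [det_transpose]
  have hinv : Aᵀ * ((A * Aᵀ)⁻¹ * A) = 1 := by
    rw [Matrix.mul_inv_rev, Matrix.mul_assoc, Matrix.nonsing_inv_mul A hA, Matrix.mul_one,
      Matrix.mul_nonsing_inv _ hAT]
  rw [quadForm, add_sub_cancel_left, mulVec_mulVec, dotProduct_mulVec, vecMul_mulVec, hinv,
    vecMul_one]

open scoped MatrixOrder in
lemma exists_mul_transpose_eq_of_posDef {d : ℕ} {S : Matrix (Fin d) (Fin d) ℝ} (hS : S.PosDef) :
    ∃ A : Matrix (Fin d) (Fin d) ℝ, A * Aᵀ = S := by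
  obtain ⟨B, hB⟩ := CStarAlgebra.nonneg_iff_eq_star_mul_self.mp hS.posSemidef.nonneg
  refine ⟨Bᵀ, ?_⟩
  rw [transpose_transpose, hB, star_eq_conjTranspose, conjTranspose_eq_transpose_of_trivial]

lemma integral_comp_add_mulVec {ι : Type*} [Fintype ι] [DecidableEq ι] {A : Matrix ι ι ℝ}
    (hA : A.det ≠ 0) (v : ι → ℝ) (Φ : (ι → ℝ) → ℝ) :
    ∫ y, Φ (v + A *ᵥ y) = |A.det|⁻¹ * ∫ x, Φ x := by
  have hinj : Function.Injective (Matrix.toLin' A) :=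
    mulVec_injective_iff_isUnit.2 ((isUnit_iff_isUnit_det A).2 hA.isUnit)
  have hemb : MeasurableEmbedding (Matrix.toLin' A) :=
    (LinearMap.isClosedEmbedding_of_injective (LinearMap.ker_eq_bot.2 hinj)).measurableEmbedding
  calc ∫ y, Φ (v + A *ᵥ y) = ∫ x, Φ (v + x) ∂(volume.map (Matrix.toLin' A)) :=
        (hemb.integral_map (fun x => Φ (v + x))).symm
    _ = |A.det|⁻¹ * ∫ x, Φ (v + x) := by
        rw [Real.map_matrix_volume_pi_eq_smul_volume_pi hA, integral_smul_measure,
          ENNReal.toReal_ofReal (by positivity), abs_inv, smul_eq_mul]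
    _ = |A.det|⁻¹ * ∫ x, Φ x := by rw [integral_add_left_eq_self]

lemma integral_Ioi_pow_mul_comp_sq (n : ℕ) (G : ℝ → ℝ) :
    ∫ r in Ioi 0, r ^ n * G (r ^ 2) = 2⁻¹ * ∫ t in Ioi 0, t ^ (((n : ℝ) - 1) / 2) * G t := by
  rw [← integral_comp_rpow_Ioi (fun t => t ^ (((n : ℝ) - 1) / 2) * G t) two_ne_zero,
    ← integral_const_mul]
  refine setIntegral_congr_fun measurableSet_Ioi fun r (hr : 0 < r) => ?_
  have hpow : r ^ (2 - 1 : ℝ) * (r ^ (2 : ℝ)) ^ (((n : ℝ) - 1) / 2) = r ^ n := by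
    rw [← rpow_mul hr.le, ← rpow_add hr, ← rpow_natCast]
    congr 1
    ring
  rw [smul_eq_mul, rpow_two, abs_two, ← hpow, ← rpow_two]
  ring

lemma integral_comp_dotProduct_self {d : ℕ} (hd : 0 < d) (G : ℝ → ℝ) :
    ∫ y : Fin d → ℝ, G (y ⬝ᵥ y) = sd d * ∫ t in Ioi 0, t ^ (((d : ℝ) - 2) / 2) * G t := by
  have : Nonempty (Fin d) := ⟨⟨0, hd⟩⟩
  have hnorm (z : EuclideanSpace ℝ (Fin d)) : z.ofLp ⬝ᵥ z.ofLp = ‖z‖ ^ 2 := by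
    rw [EuclideanSpace.norm_eq, sq_sqrt (by positivity)]
    simp [dotProduct, sq]
  rw [← (EuclideanSpace.volume_preserving_symm_measurableEquiv_toLp (Fin d)).integral_comp
    (MeasurableEquiv.measurableEmbedding _)]
  simp only [MeasurableEquiv.toLp_symm_apply, hnorm]
  rw [integral_fun_norm_addHaar volume (fun r => G (r ^ 2)), finrank_euclideanSpace_fin,
    smul_eq_mul, nsmul_eq_mul]
  simp_rw [smul_eq_mul]
  rw [integral_Ioi_pow_mul_comp_sq, measureReal_def, EuclideanSpace.volume_ball,
    Nat.cast_sub (Nat.one_le_iff_ne_zero.2 hd.ne')]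
  simp only [ENNReal.ofReal_one, one_pow, one_mul, Fintype.card_fin, Nat.cast_one]
  have hsd : (d : ℝ) * (√π ^ d / Gamma (d / 2 + 1)) * 2⁻¹ = sd d := by
    have hΓ : 0 < Gamma (d / 2) := Gamma_pos_of_pos (by positivity)
    rw [sd, Gamma_add_one (by positivity), sqrt_eq_rpow, ← rpow_natCast, ← rpow_mul pi_pos.le]
    field_simp
  rw [ENNReal.toReal_ofReal (by positivity), ← hsd, sub_sub, one_add_one_eq_two]
  ring

lemma integral_comp_quadForm_mul_ellDensity {d : ℕ} (hd : 0 < d) (g : ℝ → ℝ)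
    (μv : Fin d → ℝ) {S : Matrix (Fin d) (Fin d) ℝ} (hS : S.PosDef) (F : ℝ → ℝ) :
    ∫ x, F (quadForm μv S x) * ellDensity g μv S x = sd d * ∫ t in Ioi 0, F t * gtilde d g t := by
  obtain ⟨A, rfl⟩ := exists_mul_transpose_eq_of_posDef hS
  have hA : A.det ≠ 0 := fun h0 => hS.det_pos.ne' (by rw [det_mul, h0, zero_mul])
  have hc : |(A * Aᵀ).det| ^ (-(1 : ℝ) / 2) = |A.det|⁻¹ := by
    rw [det_mul, det_transpose, abs_mul, ← sq, ← rpow_natCast, ← rpow_mul (abs_nonneg _)]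
    norm_num [rpow_neg_one]
  calc ∫ x, F (quadForm μv (A * Aᵀ) x) * ellDensity g μv (A * Aᵀ) x
      = |A.det| * ∫ y, F (quadForm μv (A * Aᵀ) (μv + A *ᵥ y)) *
          ellDensity g μv (A * Aᵀ) (μv + A *ᵥ y) := by
        rw [integral_comp_add_mulVec hA μv
          (fun x => F (quadForm μv (A * Aᵀ) x) * ellDensity g μv (A * Aᵀ) x),
          mul_inv_cancel_left₀ (abs_ne_zero.2 hA)]
    _ = ∫ y : Fin d → ℝ, F (y ⬝ᵥ y) * g (y ⬝ᵥ y) := by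
        simp only [ellDensity, quadForm_mul_transpose_add_mulVec μv hA.isUnit, hc,
          mul_left_comm _ |A.det|⁻¹, integral_const_mul, inv_mul_cancel_left₀ (abs_ne_zero.2 hA)]
    _ = sd d * ∫ t in Ioi 0, F t * gtilde d g t := by
        rw [integral_comp_dotProduct_self hd (fun t => F t * g t)]
        simp only [gtilde, mul_left_comm]

lemma setIntegral_Ioi_comp_sub_div_mul (Φ ρ : ℝ → ℝ) (u0 : ℝ) {c : ℝ} (hc : 0 < c) :
    ∫ u in Ioi 0, Φ ((u0 - u) / c) * ρ u = c * ∫ w, Φ w * (Ioi 0).indicator ρ (u0 - c * w) := by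
  have hshift (w : ℝ) : Φ w * (Ioi 0).indicator ρ (u0 - c * w) =
      (Ioi 0).indicator (fun u => Φ ((u0 - u) / c) * ρ u) (u0 - c * w) := by
    rw [indicator_mul_right, sub_sub_cancel, mul_div_cancel_left₀ w hc.ne']
  simp_rw [hshift]
  rw [Measure.integral_comp_mul_left
      (fun v => (Ioi 0).indicator (fun u => Φ ((u0 - u) / c) * ρ u) (u0 - v)),
    integral_sub_left_eq_self, integral_indicator measurableSet_Ioi, abs_inv, abs_of_pos hc,
    smul_eq_mul, mul_inv_cancel_left₀ hc.ne']

lemma integral_kernel_mul_ellDensity {d : ℕ} (hd : 0 < d) {a : ℝ} (ha : 0 ≤ a) (g : ℝ → ℝ)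
    (μv : Fin d → ℝ) {S : Matrix (Fin d) (Fin d) ℝ} (hS : S.PosDef) (Φ : ℝ → ℝ) (u0 : ℝ) {c : ℝ}
    (hc : 0 < c) :
    ∫ x, Φ ((u0 - psi d a (quadForm μv S x)) / c) * ellDensity g μv S x =
      sd d * (c * ∫ w, Φ w * (Ioi 0).indicator (rho d a g) (u0 - c * w)) := by
  rw [integral_comp_quadForm_mul_ellDensity hd g μv hS (fun t => Φ ((u0 - psi d a t) / c)),
    ← setIntegral_Ioi_mul_rho hd ha g (fun u => Φ ((u0 - u) / c)),
    setIntegral_Ioi_comp_sub_div_mul _ _ _ hc]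

lemma HasCompactSupport.integrable_of_bound {α E : Type*} [TopologicalSpace α] [MeasurableSpace α]
    [NormedAddCommGroup E] {μ : Measure α} [IsFiniteMeasureOnCompacts μ] {f : α → E}
    (hf : HasCompactSupport f) (hfm : AEStronglyMeasurable f μ) {M : ℝ} (hb : ∀ x, ‖f x‖ ≤ M) :
    Integrable f μ :=
  (integrableOn_iff_integrable_of_support_subset (subset_tsupport f)).1
    (Measure.integrableOn_of_bounded hf.isCompact.measure_lt_top.ne hfm (ae_of_all _ hb))

lemma HasCompactSupport.eventually_forall_le_div_eq_zero {ι : Type*} {l : Filter ι} {K : ℝ → ℝ}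
    (hK : HasCompactSupport K) {u0 : ℝ} (hu0 : 0 < u0) {h : ι → ℝ}
    (hh : Tendsto h l (𝓝[>] 0)) : ∀ᶠ i in l, ∀ v, u0 ≤ v → K (v / h i) = 0 := by
  obtain ⟨R, hR⟩ := hK.isBounded.subset_closedBall 0
  have hpos : ∀ᶠ i in l, 0 < h i := hh self_mem_nhdsWithin
  have hbig : ∀ᶠ i in l, R < u0 / h i :=
    (hh.inv_tendsto_nhdsGT_zero.const_mul_atTop hu0).eventually_gt_atTop R
  filter_upwards [hpos, hbig] with i hi hRi v hv
  refine image_eq_zero_of_notMem_tsupport fun hmem => ?_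
  have hle := (hR hmem).out
  rw [dist_zero_right, norm_eq_abs] at hle
  have : u0 / h i ≤ v / h i := div_le_div_of_nonneg_right hv hi.le
  linarith [le_abs_self (v / h i)]

lemma tendsto_integral_mul_comp_sub_mul {ι : Type*} {l : Filter ι} [l.IsCountablyGenerated]
    {Φ ρ : ℝ → ℝ} (hΦ : Integrable Φ) (hΦs : HasCompactSupport Φ) (hρm : Measurable ρ) {u0 : ℝ}
    (hρ : ContinuousAt ρ u0) {h : ι → ℝ} (hh : Tendsto h l (𝓝 0)) :
    Tendsto (fun i => ∫ w, Φ w * ρ (u0 - h i * w)) l (𝓝 ((∫ w, Φ w) * ρ u0)) := by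
  obtain ⟨R, hR⟩ := hΦs.isBounded.subset_closedBall 0
  obtain ⟨δ, hδ, hρδ⟩ := Metric.continuousAt_iff.1 hρ 1 one_pos
  have hbound {x : ℝ} (hx : dist x u0 < δ) : |ρ x| ≤ |ρ u0| + 1 := by
    have := hρδ hx
    rw [dist_eq] at this
    linarith [abs_sub_abs_le_abs_sub (ρ x) (ρ u0)]
  have hclose : ∀ᶠ i in l, ∀ w ∈ tsupport Φ, dist (u0 - h i * w) u0 < δ := by
    have hlim : Tendsto (fun i => |h i| * R) l (𝓝 0) := by simpa using hh.abs.mul_const R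
    filter_upwards [hlim.eventually (gt_mem_nhds hδ)] with i hi w hw
    have hw' : |w| ≤ R := by simpa using hR hw
    rw [dist_eq, sub_sub_cancel_left, abs_neg, abs_mul]
    exact lt_of_le_of_lt (mul_le_mul_of_nonneg_left hw' (abs_nonneg _)) hi
  rw [← integral_mul_const]
  refine tendsto_integral_filter_of_dominated_convergence (fun w => |Φ w| * (|ρ u0| + 1))
    (Eventually.of_forall fun i => hΦ.aestronglyMeasurable.mul
      (hρm.comp (by fun_prop)).aestronglyMeasurable) ?_ (hΦ.abs.mul_const _)
    (ae_of_all _ fun w => tendsto_const_nhds.mul (hρ.tendsto.comp ?_))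
  · filter_upwards [hclose] with i hi
    refine ae_of_all _ fun w => ?_
    by_cases hw : w ∈ tsupport Φ
    · rw [norm_mul, norm_eq_abs, norm_eq_abs]
      exact mul_le_mul_of_nonneg_left (hbound (hi w hw)) (abs_nonneg _)
    · simp [image_eq_zero_of_notMem_tsupport hw]
  · simpa using tendsto_const_nhds.sub (hh.mul_const w)

lemma integral_withDensity_ofReal {α : Type*} [MeasurableSpace α] {μ : Measure α} {f : α → ℝ}
    (hf : Measurable f) (hf0 : ∀ x, 0 ≤ f x) (φ : α → ℝ) :
    ∫ x, φ x ∂μ.withDensity (fun x => ENNReal.ofReal (f x)) = ∫ x, φ x * f x ∂μ := by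
  rw [integral_withDensity_eq_integral_toReal_smul hf.ennreal_ofReal
    (ae_of_all _ fun _ => ENNReal.ofReal_lt_top)]
  congr 1
  ext x
  rw [ENNReal.toReal_ofReal (hf0 x), smul_eq_mul, mul_comm]

open ProbabilityTheory in
lemma variance_sum_comp_of_iIndepFun {Ω E : Type*} [MeasurableSpace Ω] [MeasurableSpace E]
    {P : Measure Ω} {X : ℕ → Ω → E} (hXm : ∀ i, Measurable (X i)) (hindep : iIndepFun X P)
    {ν : Measure E} (hident : ∀ i, P.map (X i) = ν) {φ : E → ℝ} (hφm : Measurable φ)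
    (hφ : MemLp φ 2 ν) (n : ℕ) :
    variance (fun ω => ∑ i ∈ Finset.range n, φ (X i ω)) P = n * variance φ ν := by
  have hmem (i : ℕ) : MemLp (fun ω => φ (X i ω)) 2 P :=
    ((hident i).symm ▸ hφ).comp_of_map (hXm i).aemeasurable
  have hvar (i : ℕ) : variance (fun ω => φ (X i ω)) P = variance φ ν := by
    rw [← hident i, variance_map hφm.aemeasurable (hXm i).aemeasurable]
    rfl
  have hsum : (fun ω => ∑ i ∈ Finset.range n, φ (X i ω)) =
      ∑ i ∈ Finset.range n, fun ω => φ (X i ω) := by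
    ext ω
    simp
  rw [hsum, IndepFun.variance_sum (fun i _ => hmem i)
      (fun i _ j _ hij => (hindep.indepFun hij).comp hφm hφm)]
  simp [hvar]

open ProbabilityTheory in
lemma mul_pow_mul_variance_etahat_eq {d : ℕ} (hd : 0 < d) {a : ℝ} (ha : 0 ≤ a) {g : ℝ → ℝ}
    (hgm : Measurable g) (hg0 : ∀ x, 0 ≤ g x) {μv : Fin d → ℝ} {S : Matrix (Fin d) (Fin d) ℝ}
    (hS : S.PosDef) {Ω : Type*} [MeasurableSpace Ω] {P : Measure Ω} [IsProbabilityMeasure P]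
    {X : ℕ → Ω → (Fin d → ℝ)} (hXm : ∀ i, Measurable (X i)) (hindep : iIndepFun X P)
    (hident : ∀ i, P.map (X i) =
      volume.withDensity (fun x => ENNReal.ofReal (ellDensity g μv S x)))
    (k : ℕ) {Kk : ℝ → ℝ} (hKm : Measurable Kk) {M : ℝ} (hKb : ∀ x, |Kk x| ≤ M) {ξ h : ℝ}
    (hh : 0 < h) (hvanish : ∀ v, psi d a ξ ≤ v → Kk (v / h) = 0) {n : ℕ} (hn : n ≠ 0) :
    n * h ^ (2 * k + 1) * variance (etahat d k a Kk μv S X n h ξ) P =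
      (∫ w, Kk w ^ 2 * (Ioi 0).indicator (rho d a g) (psi d a ξ - h * w)) / sd d -
        h * (∫ w, Kk w * (Ioi 0).indicator (rho d a g) (psi d a ξ - h * w)) ^ 2 := by
  have hetahat : etahat d k a Kk μv S X n h ξ = fun ω => 1 / (n * h ^ (k + 1) * sd d) *
      ∑ i ∈ Finset.range n, Kk ((psi d a ξ - psi d a (quadForm μv S (X i ω))) / h) := by
    ext ω
    refine congrArg _ (Finset.sum_congr rfl fun i _ => ?_)
    rw [hvanish _ (le_add_of_nonneg_right (psi_nonneg hd ha (quadForm_nonneg μv hS _))), add_zero]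
  have hφm : Measurable fun x => Kk ((psi d a ξ - psi d a (quadForm μv S x)) / h) :=
    hKm.comp ((continuous_psi.comp (continuous_quadForm μv S)).measurable.const_sub _
      |>.div_const _)
  set ν := volume.withDensity (fun x => ENNReal.ofReal (ellDensity g μv S x)) with hν_def
  have hν : IsProbabilityMeasure ν :=
    hident 0 ▸ Measure.isProbabilityMeasure_map (hXm 0).aemeasurable
  have hφ : MemLp _ 2 ν := .of_bound hφm.aestronglyMeasurable M (ae_of_all _ fun x => hKb _)
  have hf : Measurable (ellDensity g μv S) :=
    (hgm.comp (continuous_quadForm μv S).measurable).const_mul _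
  have hf0 (x : Fin d → ℝ) : 0 ≤ ellDensity g μv S x := mul_nonneg (by positivity) (hg0 _)
  have hsd : 0 < sd d := div_pos (by positivity) (Gamma_pos_of_pos (by positivity))
  rw [hetahat, variance_const_mul, variance_sum_comp_of_iIndepFun hXm hindep hident hφm hφ,
    variance_eq_sub hφ]
  simp only [Pi.pow_apply, hν_def, integral_withDensity_ofReal hf hf0]
  rw [integral_kernel_mul_ellDensity hd ha g μv hS (fun w => Kk w ^ 2) _ hh,
    integral_kernel_mul_ellDensity hd ha g μv hS Kk _ hh]
  field_simp
  ring

theorem etahat_variance_asymptotics_general (d : ℕ) (hd : 2 ≤ d) (a : ℝ) (ha : 0 < a)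
    (g : ℝ → ℝ) (hgm : Measurable g) (hg0 : ∀ x, 0 ≤ g x)
    (μv : Fin d → ℝ) (S : Matrix (Fin d) (Fin d) ℝ) (hS : S.PosDef)
    {Ω : Type*} [MeasurableSpace Ω] (P : Measure Ω) [IsProbabilityMeasure P]
    (X : ℕ → Ω → (Fin d → ℝ)) (hXm : ∀ i, Measurable (X i))
    (hindep : ProbabilityTheory.iIndepFun X P)
    (hident : ∀ i, Measure.map (X i) P =
      volume.withDensity (fun x => ENNReal.ofReal (ellDensity g μv S x)))
    (k m : ℕ)
    (Kk : ℝ → ℝ) (hKm : Measurable Kk) (hKb : ∃ M : ℝ, ∀ x, |Kk x| ≤ M)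
    (hKsupp : HasCompactSupport Kk)
    (ξ : ℝ) (hξ : 0 < ξ)
    (hρ : ContDiffAt ℝ (↑(m + 1)) (rho d a g) (psi d a ξ))
    (h : ℕ → ℝ) (hhpos : ∀ n, 0 < h n) (hh0 : Tendsto h atTop (nhds 0)) :
    Tendsto (fun n : ℕ =>
        (n : ℝ) * h n ^ (2 * k + 1) *
          ProbabilityTheory.variance (etahat d k a Kk μv S X n (h n) ξ) P)
      atTop (nhds (za d a g ξ * (∫ w : ℝ, (Kk w) ^ 2) / sd d)) := by
  obtain ⟨M, hKb⟩ := hKb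
  have hd0 : 0 < d := by omega
  have hu0 : 0 < psi d a ξ := psi_pos hd0 ha.le hξ
  have hρ₀m : Measurable ((Ioi 0).indicator (rho d a g)) :=
    (measurable_rho hgm).indicator measurableSet_Ioi
  have hρ₀ : ContinuousAt ((Ioi 0).indicator (rho d a g)) (psi d a ξ) :=
    hρ.continuousAt.congr (eventually_of_mem (Ioi_mem_nhds hu0) fun _ hx =>
      (indicator_of_mem hx _).symm)
  have hKint : Integrable Kk := hKsupp.integrable_of_bound hKm.aestronglyMeasurable hKb
  have hK2supp : HasCompactSupport fun w => Kk w ^ 2 :=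
    hKsupp.comp_left (g := (· ^ 2)) (zero_pow two_ne_zero)
  have hK2int : Integrable fun w => Kk w ^ 2 :=
    hK2supp.integrable_of_bound (hKm.pow_const 2).aestronglyMeasurable (M := M ^ 2)
      fun w => by simpa using pow_le_pow_left₀ (abs_nonneg _) (hKb w) 2
  have hlim := ((tendsto_integral_mul_comp_sub_mul hK2int hK2supp hρ₀m hρ₀ hh0).div_const
    (sd d)).sub (hh0.mul ((tendsto_integral_mul_comp_sub_mul hKint hKsupp hρ₀m hρ₀ hh0).pow 2))
  rw [zero_mul, sub_zero, indicator_of_mem (mem_Ioi.2 hu0), rho, Psi_psi hd0 ha.le hξ.le,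
    mul_comm] at hlim
  refine hlim.congr' ?_
  filter_upwards [hKsupp.eventually_forall_le_div_eq_zero hu0
    (tendsto_nhdsWithin_iff.2 ⟨hh0, .of_forall hhpos⟩), eventually_ne_atTop 0] with n hn hn0
  exact (mul_pow_mul_variance_etahat_eq hd0 ha.le hgm hg0 hS hXm hindep hident k hKm hKb
    (hhpos n) hn hn0).symm

/-- asymptotic variance of the derivative estimator:
`n·h(n)^{2k+1}·Var[η̂_{k,n,h(n),a}(ξ)] → z_a(ξ)·‖K_k‖₂²/s_d`. -/
theorem etahat_variance_asymptotics (d : ℕ) (hd : 2 ≤ d) (a : ℝ) (ha : 0 < a)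
    (g : ℝ → ℝ) (hgm : Measurable g) (hg0 : ∀ x, 0 ≤ g x)
    (μv : Fin d → ℝ) (S : Matrix (Fin d) (Fin d) ℝ) (hS : S.PosDef)
    {Ω : Type*} [MeasurableSpace Ω] (P : Measure Ω) [IsProbabilityMeasure P]
    (X : ℕ → Ω → (Fin d → ℝ)) (hXm : ∀ i, Measurable (X i))
    (hindep : ProbabilityTheory.iIndepFun X P)
    (hident : ∀ i, Measure.map (X i) P =
      volume.withDensity (fun x => ENNReal.ofReal (ellDensity g μv S x)))
    (k m : ℕ) (hkm : k + 2 ≤ m)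
    (Kk : ℝ → ℝ) (hKm : Measurable Kk) (hKb : ∃ M : ℝ, ∀ x, |Kk x| ≤ M)
    (hKsupp : HasCompactSupport Kk)
    (hord0 : ∀ j : ℕ, j < m → j ≠ k → ∫ x : ℝ, Kk x * x ^ j = 0)
    (hordk : ∫ x : ℝ, Kk x * x ^ k = (-1 : ℝ) ^ k * (Nat.factorial k : ℝ))
    (μm : ℝ) (hordm : ∫ x : ℝ, Kk x * x ^ m = μm) (hμm : μm ≠ 0)
    (ξ : ℝ) (hξ : 0 < ξ) (hgpos : 0 < g ξ)
    (hρ : ContDiffAt ℝ (↑(m + 1)) (rho d a g) (psi d a ξ))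
    (h : ℕ → ℝ) (hhpos : ∀ n, 0 < h n) (hh0 : Tendsto h atTop (nhds 0))
    (hnh : Tendsto (fun n : ℕ => (n : ℝ) * h n ^ (2 * k + 1)) atTop atTop) :
    Tendsto (fun n : ℕ =>
        (n : ℝ) * h n ^ (2 * k + 1) *
          ProbabilityTheory.variance (etahat d k a Kk μv S X n (h n) ξ) P)
      atTop (nhds (za d a g ξ * (∫ w : ℝ, (Kk w) ^ 2) / sd d)) :=
  etahat_variance_asymptotics_general d hd a ha g hgm hg0 μv S hS P X hXm hindep hident k m Kk hKm
    hKb hKsupp ξ hξ hρ h hhpos hh0
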